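/- arXiv:0811.4059 — 2 statements merged into one kernel-verified Lean document; each statement's English description precedes it below -/
import Mathlib

section
/- The assignment (x, Z) ↦ (AZ + B)(CZ + D)⁻¹ defines a group action of Sp(g, ℝ) on the Siegel upper half space ℋ_g: the identity acts trivially and (xy) · Z = x · (y · Z) for all x, y ∈ Sp(g, ℝ) and Z ∈ ℋ_g. -/
open Matrix

noncomputable section

/-- The standard symplectic form matrix J = [[0, I], [-I, 0]]. -/
def Jmat (R : Type*) [CommRing R] (n : Type*) [Fintype n] [DecidableEq n] :
    Matrix (n ⊕ n) (n ⊕ n) R :=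
  Matrix.fromBlocks 0 1 (-1) 0

/-- Membership in the symplectic group: xᵀ J x = J. -/
def IsSp {R : Type*} [CommRing R] {n : Type*} [Fintype n] [DecidableEq n]
    (x : Matrix (n ⊕ n) (n ⊕ n) R) : Prop :=
  xᵀ * Jmat R n * x = Jmat R n

/-- Membership in the Siegel upper half space: symmetric with positive definite
imaginary part. -/
def InSiegel {n : Type*} [Fintype n] (Z : Matrix n n ℂ) : Prop :=
  Z.IsSymm ∧ (Z.map Complex.im).PosDef

/-- The action of the symplectic group by fractional linear transformations:
x · Z = (A Z + B)(C Z + D)⁻¹ for x = [[A,B],[C,D]]. -/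
def spAct {n : Type*} [Fintype n] [DecidableEq n]
    (x : Matrix (n ⊕ n) (n ⊕ n) ℝ) (Z : Matrix n n ℂ) : Matrix n n ℂ :=
  (x.toBlocks₁₁.map (Complex.ofReal) * Z + x.toBlocks₁₂.map (Complex.ofReal)) *
    (x.toBlocks₂₁.map (Complex.ofReal) * Z + x.toBlocks₂₂.map (Complex.ofReal))⁻¹

/-!
Put `W = [Z; 1]`. Then `x * W = [AZ + B; CZ + D]`, so `x · Z` is the top block of `x * W`
normalised by the inverse of its bottom block. Since `y * W = [y · Z; 1] * (C'Z + D')`,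
the identity `(x * y) * W = x * (y * W)` gives `(x * y) · Z = x · (y · Z)` as soon as
`C'Z + D'` is invertible. For `y` real symplectic, `Wᴴ yᴴ J y W = Wᴴ J W` reads
`(A'Z + B')ᴴ (C'Z + D') - (C'Z + D')ᴴ (A'Z + B') = Zᴴ - Z = -2i Im Z`; a kernel vector `v`
of `C'Z + D'` would then satisfy `v* (Im Z) v = 0`, so `v = 0` as `Im Z` is positive definite.
-/

namespace Matrix

variable {n R : Type*} [Fintype n] [DecidableEq n] [CommRing R]

def fracLinear (X : Matrix (n ⊕ n) (n ⊕ n) R) (Z : Matrix n n R) : Matrix n n R :=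
  (X.toBlocks₁₁ * Z + X.toBlocks₁₂) * (X.toBlocks₂₁ * Z + X.toBlocks₂₂)⁻¹

-- The ascription on `1` keeps `*` from elaborating through the `CStarMatrix` instance.
theorem mul_fromRows_one (X : Matrix (n ⊕ n) (n ⊕ n) R) (Z : Matrix n n R) :
    X * fromRows Z (1 : Matrix n n R) =
      fromRows (X.toBlocks₁₁ * Z + X.toBlocks₁₂) (X.toBlocks₂₁ * Z + X.toBlocks₂₂) := by
  conv_lhs => rw [← X.fromBlocks_toBlocks]
  rw [fromBlocks_mul_fromRows, Matrix.mul_one, Matrix.mul_one]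

theorem fracLinear_one (Z : Matrix n n R) : fracLinear 1 Z = Z := by
  simp [fracLinear, ← fromBlocks_one]

theorem fracLinear_mul (X Y : Matrix (n ⊕ n) (n ⊕ n) R) {Z : Matrix n n R}
    (hY : IsUnit (Y.toBlocks₂₁ * Z + Y.toBlocks₂₂).det) :
    fracLinear (X * Y) Z = fracLinear X (fracLinear Y Z) := by
  set M := Y.toBlocks₂₁ * Z + Y.toBlocks₂₂
  have hY' : Y * fromRows Z (1 : Matrix n n R) = fromRows (fracLinear Y Z) 1 * M := by
    rw [mul_fromRows_one, fromRows_mul, Matrix.one_mul, fracLinear,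
      nonsing_inv_mul_cancel_right _ _ hY]
  have hXY : X * Y * fromRows Z (1 : Matrix n n R) =
      X * fromRows (fracLinear Y Z) (1 : Matrix n n R) * M := by
    rw [Matrix.mul_assoc, hY', Matrix.mul_assoc]
  rw [mul_fromRows_one, mul_fromRows_one, fromRows_mul] at hXY
  obtain ⟨hnum, hden⟩ := fromRows_inj hXY
  rw [fracLinear, hnum, hden, Matrix.mul_inv_rev, Matrix.mul_assoc,
    mul_nonsing_inv_cancel_left _ _ hY]
  rfl

end Matrix

section Symplectic

variable {n R : Type*} [Fintype n] [DecidableEq n] [CommRing R]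

theorem IsSp.map {S : Type*} [CommRing S] (f : R →+* S) {X : Matrix (n ⊕ n) (n ⊕ n) R}
    (hX : IsSp X) : IsSp (f.mapMatrix X) := by
  have hJ : f.mapMatrix (Jmat R n) = Jmat S n := by
    simp [Jmat, fromBlocks_map, Matrix.map_neg]
  rw [IsSp, ← hJ, RingHom.mapMatrix_apply, ← transpose_map, ← RingHom.mapMatrix_apply,
    ← RingHom.mapMatrix_apply, ← map_mul, ← map_mul, hX]

theorem conjTranspose_fromRows_mul_Jmat_mul_fromRows [StarRing R] {m : Type*}
    (P Q : Matrix n m R) :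
    (fromRows P Q)ᴴ * Jmat R n * fromRows P Q = Pᴴ * Q - Qᴴ * P := by
  rw [conjTranspose_fromRows_eq_fromCols_conjTranspose, Jmat, fromCols_mul_fromBlocks,
    fromCols_mul_fromRows]
  simp [sub_eq_add_neg, add_comm]

theorem IsSp.conjTranspose_mul_sub [StarRing R] {X : Matrix (n ⊕ n) (n ⊕ n) R} (hX : IsSp X)
    (hXreal : Xᴴ = Xᵀ) (Z : Matrix n n R) :
    (X.toBlocks₁₁ * Z + X.toBlocks₁₂)ᴴ * (X.toBlocks₂₁ * Z + X.toBlocks₂₂) -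
      (X.toBlocks₂₁ * Z + X.toBlocks₂₂)ᴴ * (X.toBlocks₁₁ * Z + X.toBlocks₁₂) = Zᴴ - Z := by
  have h := conjTranspose_fromRows_mul_Jmat_mul_fromRows Z (1 : Matrix n n R)
  rw [← hX, ← hXreal] at h
  simp only [conjTranspose_one, Matrix.mul_one, Matrix.one_mul] at h
  rw [← h, ← conjTranspose_fromRows_mul_Jmat_mul_fromRows, ← mul_fromRows_one,
    conjTranspose_mul]
  simp only [Matrix.mul_assoc]

end Symplectic

section Siegel

open scoped ComplexOrder

namespace Matrix

variable {m n : Type*}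

theorem IsSymm.sub_conjTranspose {Z : Matrix n n ℂ} (hZ : Z.IsSymm) :
    Z - Zᴴ = (2 * Complex.I) • (Z.map Complex.im).map Complex.ofRealHom := by
  ext i j
  simp only [sub_apply, conjTranspose_apply, hZ.apply, smul_apply, map_apply, smul_eq_mul,
    Complex.star_def, Complex.sub_conj, Complex.ofRealHom_eq_coe]
  push_cast
  ring

theorem conjTranspose_map_ofRealHom (x : Matrix m n ℝ) :
    (x.map Complex.ofRealHom)ᴴ = (x.map Complex.ofRealHom)ᵀ := by
  rw [← conjTranspose_map (f := Complex.ofRealHom) fun r => (Complex.conj_ofReal r).symm,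
    conjTranspose_eq_transpose_of_trivial, transpose_map]

theorem PosDef.map_ofRealHom [Fintype n] [DecidableEq n] {P : Matrix n n ℝ} (hP : P.PosDef) :
    (P.map Complex.ofRealHom).PosDef := by
  open scoped MatrixOrder in
  obtain ⟨B, hB⟩ := CStarAlgebra.nonneg_iff_eq_star_mul_self.mp hP.posSemidef.nonneg
  have hsemi : (P.map Complex.ofRealHom).PosSemidef := by
    rw [hB, Matrix.map_mul, star_eq_conjTranspose, conjTranspose_eq_transpose_of_trivial,
      transpose_map, ← conjTranspose_map_ofRealHom]
    exact posSemidef_conjTranspose_mul_self _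
  rw [hsemi.posDef_iff_det_ne_zero, ← RingHom.mapMatrix_apply, ← RingHom.map_det]
  exact Complex.ofReal_ne_zero.mpr hP.det_pos.ne'

end Matrix

variable {n : Type*} [Fintype n] [DecidableEq n]

theorem IsSp.isUnit_det_toBlocks₂₁_mul_add_toBlocks₂₂ {X : Matrix (n ⊕ n) (n ⊕ n) ℂ}
    (hX : IsSp X) (hXreal : Xᴴ = Xᵀ) {Z : Matrix n n ℂ} (hZ : InSiegel Z) :
    IsUnit (X.toBlocks₂₁ * Z + X.toBlocks₂₂).det := by
  rw [isUnit_iff_ne_zero, Ne, ← exists_mulVec_eq_zero_iff]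
  rintro ⟨v, hv0, hMv⟩
  have hform : star v ⬝ᵥ ((Z - Zᴴ) *ᵥ v) = 0 := by
    rw [← neg_sub, ← hX.conjTranspose_mul_sub hXreal Z, neg_mulVec, sub_mulVec,
      ← mulVec_mulVec, ← mulVec_mulVec, hMv, mulVec_zero, dotProduct_neg, dotProduct_sub,
      dotProduct_mulVec, ← star_mulVec, hMv]
    simp
  rw [hZ.1.sub_conjTranspose, smul_mulVec, dotProduct_smul, smul_eq_mul] at hform
  have hpos := hZ.2.map_ofRealHom.dotProduct_mulVec_pos hv0
  exact hpos.ne' ((mul_eq_zero.mp hform).resolve_left (by simp))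

theorem spAct_eq_fracLinear (x : Matrix (n ⊕ n) (n ⊕ n) ℝ) (Z : Matrix n n ℂ) :
    spAct x Z = fracLinear (x.map Complex.ofRealHom) Z :=
  rfl

end Siegel

/-- (x, Z) ↦ (AZ+B)(CZ+D)⁻¹ is a group action of Sp(g,ℝ) on ℋ_g:
the identity acts trivially and (xy)·Z = x·(y·Z). -/
theorem stmt5 {g : ℕ} :
    (∀ Z : Matrix (Fin g) (Fin g) ℂ, InSiegel Z →
      spAct (1 : Matrix (Fin g ⊕ Fin g) (Fin g ⊕ Fin g) ℝ) Z = Z) ∧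
    (∀ x y : Matrix (Fin g ⊕ Fin g) (Fin g ⊕ Fin g) ℝ,
      ∀ Z : Matrix (Fin g) (Fin g) ℂ, IsSp x → IsSp y → InSiegel Z →
        spAct (x * y) Z = spAct x (spAct y Z)) := by
  refine ⟨fun Z _ => ?_, fun x y Z _ hy hZ => ?_⟩
  · rw [spAct_eq_fracLinear, Matrix.map_one _ (map_zero _) (map_one _), fracLinear_one]
  · rw [spAct_eq_fracLinear, spAct_eq_fracLinear, spAct_eq_fracLinear, Matrix.map_mul]
    exact fracLinear_mul _ _ <|
      (hy.map Complex.ofRealHom).isUnit_det_toBlocks₂₁_mul_add_toBlocks₂₂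
        (conjTranspose_map_ofRealHom y) hZ
end
end

section
/- The stabilizer of the point i I_g ∈ ℋ_g under the Sp(g, ℝ)-action consists exactly of the matrices [[A, B], [-B, A]] ∈ Sp(g, ℝ) such that A + iB is a unitary g × g matrix; in particular the stabilizer is isomorphic as a group to the unitary group U(g). -/
open Matrix

noncomputable section

/-! Write `x = [[A, B], [C, D]]`, so that `x · iI = (iA + B)(iC + D)⁻¹`. This equals `iI`
exactly when `iC + D` is invertible and `iA + B = i(iC + D) = -C + iD`, i.e. `C = -B` and
`D = A`. For such `x` the symplectic relations `xᵀJx = J` reduce to `AᵀA + BᵀB = 1` and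
`AᵀB = BᵀA`, which are the real and imaginary parts of `(A + iB)ᴴ(A + iB) = 1`. Conversely,
if `A + iB` is unitary then so is its conjugate `A - iB`, which is therefore invertible. -/

open Complex

namespace Matrix

variable {m n : Type*}

theorem map_re_ofReal_add_I_smul (P Q : Matrix m n ℝ) :
    (P.map ofReal + I • Q.map ofReal).map re = P := by
  ext; simp

theorem map_im_ofReal_add_I_smul (P Q : Matrix m n ℝ) :
    (P.map ofReal + I • Q.map ofReal).map im = Q := by
  ext; simp

theorem ofReal_add_I_smul_inj {P Q R S : Matrix m n ℝ} :
    P.map ofReal + I • Q.map ofReal = R.map ofReal + I • S.map ofReal ↔ P = R ∧ Q = S := by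
  refine ⟨fun h => ⟨?_, ?_⟩, fun ⟨hP, hQ⟩ => hP ▸ hQ ▸ rfl⟩
  · simpa only [map_re_ofReal_add_I_smul] using congrArg (map · re) h
  · simpa only [map_im_ofReal_add_I_smul] using congrArg (map · im) h

variable [Fintype n] [DecidableEq n]

theorem star_ofReal_add_I_smul_mul_self (A B : Matrix n n ℝ) :
    star (A.map ofReal + I • B.map ofReal) * (A.map ofReal + I • B.map ofReal) =
      (Aᵀ * A + Bᵀ * B).map ofReal + I • (Aᵀ * B - Bᵀ * A).map ofReal := by
  have hstar (M : Matrix n n ℝ) : star (M.map ofReal) = Mᵀ.map ofReal := by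
    ext; simp
  have hmul (M N : Matrix n n ℝ) : (M * N).map ofReal = M.map ofReal * N.map ofReal :=
    Matrix.map_mul (f := ofRealHom)
  simp only [star_add, star_smul, hstar, Complex.star_def, conj_I, Matrix.map_add _ ofReal_add,
    Matrix.map_sub _ ofReal_sub, hmul, add_mul, mul_add, smul_mul_assoc, mul_smul_comm, smul_smul,
    smul_add, smul_sub, smul_neg, neg_mul, I_mul_I, neg_neg, one_smul, neg_smul]
  abel

theorem ofReal_add_I_smul_mem_unitaryGroup_iff (A B : Matrix n n ℝ) :
    A.map ofReal + I • B.map ofReal ∈ unitaryGroup n ℂ ↔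
      Aᵀ * A + Bᵀ * B = 1 ∧ Aᵀ * B = Bᵀ * A := by
  have hone : (1 : Matrix n n ℂ) =
      (1 : Matrix n n ℝ).map ofReal + I • (0 : Matrix n n ℝ).map ofReal := by
    simp
  rw [mem_unitaryGroup_iff', star_ofReal_add_I_smul_mul_self, hone, ofReal_add_I_smul_inj,
    sub_eq_zero]

theorem ofReal_add_I_smul_neg_mem_unitaryGroup {A B : Matrix n n ℝ}
    (hU : A.map ofReal + I • B.map ofReal ∈ unitaryGroup n ℂ) :
    A.map ofReal + I • (-B).map ofReal ∈ unitaryGroup n ℂ := by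
  rw [ofReal_add_I_smul_mem_unitaryGroup_iff] at hU ⊢
  simpa [eq_comm] using hU

theorem eq_smul_of_mul_inv_eq_smul_one {R : Type*} [CommRing R] {N M : Matrix n n R} {c : R}
    (hc : c ≠ 0) (h : N * M⁻¹ = c • 1) : N = c • M := by
  by_cases hM : IsUnit M.det
  · rw [← nonsing_inv_mul_cancel_right M N hM, h, smul_one_mul]
  · -- a singular `M` has junk inverse `0`, which would force `c = 0`
    rw [nonsing_inv_apply_not_isUnit M hM, mul_zero] at h
    ext i
    exact absurd (by simpa using (congrFun (congrFun h i) i).symm) hc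

theorem isSp_fromBlocks_iff {R : Type*} [CommRing R] {A B C D : Matrix n n R} :
    IsSp (fromBlocks A B C D) ↔
      Aᵀ * C = Cᵀ * A ∧ Bᵀ * D = Dᵀ * B ∧ Aᵀ * D - Cᵀ * B = 1 := by
  simp only [IsSp, Jmat, fromBlocks_transpose, fromBlocks_multiply, fromBlocks_inj,
    mul_zero, mul_one, mul_neg, zero_add, add_zero, neg_mul, neg_add_eq_sub]
  have h₂₁ : Bᵀ * C - Dᵀ * A = -(Aᵀ * D - Cᵀ * B)ᵀ := by
    rw [transpose_sub, transpose_mul, transpose_mul, transpose_transpose, transpose_transpose,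
      neg_sub]
  rw [h₂₁, neg_inj, transpose_eq_one, sub_eq_zero, sub_eq_zero]
  tauto

theorem spAct_I_smul_one (x : Matrix (n ⊕ n) (n ⊕ n) ℝ) :
    spAct x (I • 1) = (I • x.toBlocks₁₁.map ofReal + x.toBlocks₁₂.map ofReal) *
      (I • x.toBlocks₂₁.map ofReal + x.toBlocks₂₂.map ofReal)⁻¹ := by
  simp only [spAct, mul_smul_comm, mul_one]

theorem eq_fromBlocks_of_spAct_I_smul_one {x : Matrix (n ⊕ n) (n ⊕ n) ℝ}
    (h : spAct x (I • 1) = I • 1) :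
    x = fromBlocks x.toBlocks₁₁ x.toBlocks₁₂ (-x.toBlocks₁₂) x.toBlocks₁₁ := by
  have hrow := eq_smul_of_mul_inv_eq_smul_one I_ne_zero ((spAct_I_smul_one x).symm.trans h)
  rw [smul_add, smul_smul, I_mul_I, neg_one_smul, add_comm, ← Matrix.map_neg _ ofReal_neg,
    ofReal_add_I_smul_inj] at hrow
  conv_lhs => rw [← fromBlocks_toBlocks x]
  rw [hrow.2, hrow.1, neg_neg]

theorem spAct_fromBlocks_I_smul_one {A B : Matrix n n ℝ}
    (hU : A.map ofReal + I • B.map ofReal ∈ unitaryGroup n ℂ) :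
    spAct (fromBlocks A B (-B) A) (I • 1) = I • 1 := by
  have hdet : IsUnit (A.map ofReal + I • (-B).map ofReal).det :=
    UnitaryGroup.det_isUnit ⟨_, ofReal_add_I_smul_neg_mem_unitaryGroup hU⟩
  have hrow : I • A.map ofReal + B.map ofReal = I • (A.map ofReal + I • (-B).map ofReal) := by
    rw [smul_add, smul_smul, I_mul_I, Matrix.map_neg _ ofReal_neg, neg_one_smul, neg_neg,
      add_comm]
  rw [spAct_I_smul_one, toBlocks_fromBlocks₁₁, toBlocks_fromBlocks₁₂, toBlocks_fromBlocks₂₁,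
    toBlocks_fromBlocks₂₂, add_comm (I • (-B).map ofReal), hrow, smul_mul_assoc,
    mul_nonsing_inv _ hdet]

end Matrix

/-- the stabilizer of i I_g in Sp(g,ℝ) consists exactly of the
matrices [[A,B],[-B,A]] ∈ Sp(g,ℝ) with A + iB unitary. -/
theorem stmt8 {g : ℕ} (x : Matrix (Fin g ⊕ Fin g) (Fin g ⊕ Fin g) ℝ)
    (hx : IsSp x) :
    spAct x (Complex.I • (1 : Matrix (Fin g) (Fin g) ℂ)) =
        Complex.I • (1 : Matrix (Fin g) (Fin g) ℂ) ↔
      ∃ A B : Matrix (Fin g) (Fin g) ℝ, x = Matrix.fromBlocks A B (-B) A ∧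
        A.map Complex.ofReal + Complex.I • B.map Complex.ofReal ∈
          Matrix.unitaryGroup (Fin g) ℂ := by
  constructor
  · intro h
    have hblocks := eq_fromBlocks_of_spAct_I_smul_one h
    refine ⟨_, _, hblocks, (ofReal_add_I_smul_mem_unitaryGroup_iff _ _).mpr ?_⟩
    obtain ⟨hAB, -, hAA⟩ := isSp_fromBlocks_iff.mp (hblocks ▸ hx)
    simp only [transpose_neg, mul_neg, neg_mul, neg_inj, sub_neg_eq_add] at hAB hAA
    exact ⟨hAA, hAB⟩
  · rintro ⟨A, B, rfl, hU⟩
    exact spAct_fromBlocks_I_smul_one hU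
end
end
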